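/- For every fixed m ∈ Fin 7, the 4-form Σ_p (e_p ⌟ φ) ∧ (e_p ⌟ (e_m ⌟ ψ)) equals 3 e_m♭ ∧ φ (which in the paper's convention equals −3 ⋆(e_m ⌟ ψ)); explicitly, for all i, j, k, l ∈ Fin 7 its (i,j,k,l) component equals 3 (δ_{mi} φ_{jkl} − δ_{mj} φ_{ikl} + δ_{mk} φ_{ijl} − δ_{ml} φ_{ijk}). -/

import Mathlib

open Finset

/-- Kronecker delta on `Fin 7`. -/
def kd (i j : Fin 7) : ℝ := if i = j then 1 else 0

/-- Components of the basic 3-form `e^a ∧ e^b ∧ e^c` (a 3×3 determinant of deltas). -/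
def E3 (a b c i j k : Fin 7) : ℝ :=
  kd a i * kd b j * kd c k + kd a j * kd b k * kd c i + kd a k * kd b i * kd c j
    - kd a i * kd b k * kd c j - kd a j * kd b i * kd c k - kd a k * kd b j * kd c i

/-- The standard G₂ 3-form `φ` on `ℝ⁷`, determined by
`φ_{123} = φ_{145} = φ_{167} = φ_{246} = 1`, `φ_{257} = φ_{347} = φ_{356} = −1`
(indices `1,…,7` correspond to `0,…,6 : Fin 7`). -/
def g2phi (i j k : Fin 7) : ℝ :=
  E3 0 1 2 i j k + E3 0 3 4 i j k + E3 0 5 6 i j k + E3 1 3 5 i j k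
    - E3 1 4 6 i j k - E3 2 3 6 i j k - E3 2 4 5 i j k

/-- Components of the basic 4-form `e^a ∧ e^b ∧ e^c ∧ e^d` (a 4×4 determinant of deltas). -/
def E4 (a b c d i j k l : Fin 7) : ℝ :=
  kd a i * E3 b c d j k l - kd a j * E3 b c d i k l
    + kd a k * E3 b c d i j l - kd a l * E3 b c d i j k

/-- The dual 4-form `ψ = ⋆φ` on `ℝ⁷`, determined by
`ψ_{1247} = ψ_{1256} = ψ_{1346} = 1`, `ψ_{1357} = ψ_{2345} = ψ_{2367} = ψ_{4567} = −1`. -/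
def g2psi (i j k l : Fin 7) : ℝ :=
  E4 0 1 3 6 i j k l + E4 0 1 4 5 i j k l + E4 0 2 3 5 i j k l
    - E4 0 2 4 6 i j k l - E4 1 2 3 4 i j k l - E4 1 2 5 6 i j k l - E4 3 4 5 6 i j k l

/-- Wedge product of two 2-forms on `ℝ⁷`, in components:
`(α ∧ β)_{i₁…i₄} = (1/(2!·2!)) Σ_{σ ∈ S₄} sgn(σ) α_{i_{σ(1)} i_{σ(2)}} β_{i_{σ(3)} i_{σ(4)}}`. -/
noncomputable def wedge22 (α β : Fin 7 → Fin 7 → ℝ) (i j k l : Fin 7) : ℝ :=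
  (1 : ℝ) / ((Nat.factorial 2 : ℝ) * (Nat.factorial 2 : ℝ)) *
    ∑ σ : Equiv.Perm (Fin 4),
      ((Equiv.Perm.sign σ : ℤ) : ℝ) *
        (α (![i, j, k, l] (σ 0)) (![i, j, k, l] (σ 1)) *
          β (![i, j, k, l] (σ 2)) (![i, j, k, l] (σ 3)))

/-- Wedge product of a 2-form and a 1-form on `ℝ⁷`, in components. -/
noncomputable def wedge21 (α : Fin 7 → Fin 7 → ℝ) (β : Fin 7 → ℝ) (i j k : Fin 7) : ℝ :=
  (1 : ℝ) / ((Nat.factorial 2 : ℝ) * (Nat.factorial 1 : ℝ)) *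
    ∑ σ : Equiv.Perm (Fin 3),
      ((Equiv.Perm.sign σ : ℤ) : ℝ) *
        (α (![i, j, k] (σ 0)) (![i, j, k] (σ 1)) * β (![i, j, k] (σ 2)))

/-- Wedge product of a 2-form and a 3-form on `ℝ⁷`, in components. -/
noncomputable def wedge23 (α : Fin 7 → Fin 7 → ℝ) (β : Fin 7 → Fin 7 → Fin 7 → ℝ)
    (i1 i2 i3 i4 i5 : Fin 7) : ℝ :=
  (1 : ℝ) / ((Nat.factorial 2 : ℝ) * (Nat.factorial 3 : ℝ)) *
    ∑ σ : Equiv.Perm (Fin 5),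
      ((Equiv.Perm.sign σ : ℤ) : ℝ) *
        (α (![i1, i2, i3, i4, i5] (σ 0)) (![i1, i2, i3, i4, i5] (σ 1)) *
          β (![i1, i2, i3, i4, i5] (σ 2)) (![i1, i2, i3, i4, i5] (σ 3))
            (![i1, i2, i3, i4, i5] (σ 4)))

/-- Wedge product of a 3-form and a 1-form on `ℝ⁷`, in components. -/
noncomputable def wedge31 (α : Fin 7 → Fin 7 → Fin 7 → ℝ) (β : Fin 7 → ℝ)
    (i j k l : Fin 7) : ℝ :=
  (1 : ℝ) / ((Nat.factorial 3 : ℝ) * (Nat.factorial 1 : ℝ)) *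
    ∑ σ : Equiv.Perm (Fin 4),
      ((Equiv.Perm.sign σ : ℤ) : ℝ) *
        (α (![i, j, k, l] (σ 0)) (![i, j, k, l] (σ 1)) (![i, j, k, l] (σ 2)) *
          β (![i, j, k, l] (σ 3)))

/-- Wedge product of a 3-form and a 2-form on `ℝ⁷`, in components. -/
noncomputable def wedge32 (α : Fin 7 → Fin 7 → Fin 7 → ℝ) (β : Fin 7 → Fin 7 → ℝ)
    (i1 i2 i3 i4 i5 : Fin 7) : ℝ :=
  (1 : ℝ) / ((Nat.factorial 3 : ℝ) * (Nat.factorial 2 : ℝ)) *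
    ∑ σ : Equiv.Perm (Fin 5),
      ((Equiv.Perm.sign σ : ℤ) : ℝ) *
        (α (![i1, i2, i3, i4, i5] (σ 0)) (![i1, i2, i3, i4, i5] (σ 1))
            (![i1, i2, i3, i4, i5] (σ 2)) *
          β (![i1, i2, i3, i4, i5] (σ 3)) (![i1, i2, i3, i4, i5] (σ 4)))

/-- Wedge product of two 3-forms on `ℝ⁷`, in components. -/
noncomputable def wedge33 (α β : Fin 7 → Fin 7 → Fin 7 → ℝ)
    (i1 i2 i3 i4 i5 i6 : Fin 7) : ℝ :=
  (1 : ℝ) / ((Nat.factorial 3 : ℝ) * (Nat.factorial 3 : ℝ)) *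
    ∑ σ : Equiv.Perm (Fin 6),
      ((Equiv.Perm.sign σ : ℤ) : ℝ) *
        (α (![i1, i2, i3, i4, i5, i6] (σ 0)) (![i1, i2, i3, i4, i5, i6] (σ 1))
            (![i1, i2, i3, i4, i5, i6] (σ 2)) *
          β (![i1, i2, i3, i4, i5, i6] (σ 3)) (![i1, i2, i3, i4, i5, i6] (σ 4))
            (![i1, i2, i3, i4, i5, i6] (σ 5)))

/-- `(ℓ_φ h)_{ijk} = Σ_m (h_{im} φ_{mjk} + h_{jm} φ_{imk} + h_{km} φ_{ijm})`. -/
noncomputable def ellphi (h : Fin 7 → Fin 7 → ℝ) (i j k : Fin 7) : ℝ :=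
  ∑ m : Fin 7, (h i m * g2phi m j k + h j m * g2phi i m k + h k m * g2phi i j m)

/-- `(ℓ_ψ h)_{ijkl} = Σ_m (h_{im} ψ_{mjkl} + h_{jm} ψ_{imkl} + h_{km} ψ_{ijml} + h_{lm} ψ_{ijkm})`. -/
noncomputable def ellpsi (h : Fin 7 → Fin 7 → ℝ) (i j k l : Fin 7) : ℝ :=
  ∑ m : Fin 7,
    (h i m * g2psi m j k l + h j m * g2psi i m k l + h k m * g2psi i j m l + h l m * g2psi i j k m)


/-! ### Auxiliary machinery -/

section Aux
open Equiv

/-- Integer tables for `φ` and `ψ`, encoded as base-4 digits of big naturals. -/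
def PHIN : ℕ := 107017737686688832186905924265557916846565999640999659976277428336477110188375225429138854406297771884918359270384575958273695805244576610575775844077607584927335891395507980838342701044684456587571995694421
def PSIN : ℕ := 117197385606384433234377725535744959203027709049453967901842068072766242213011407203961093210526138474138493887516418348694217927458384055086163066915633220662953273796490421489114189079963682989077570935803317499262800606389489636074632006492176630987523291576430495248929660349889626718490995087103424518441095714289339493860434471441571944815558970078914618367532790712849404463965039367069828359748955718242507848959890722559128188660837075110181379712575056525511157581535401447178899522826581069978769213396481063547597006376323542716013548404801463720275609463668849277388021692917197580624125575976242540728467188993719005757757020736903015492433994870982020091398257132621485701206164079323765472445296716098079346598983345180053290959990926541315475302963668363940708768548101441713815614091924485837386180045061477327240072232065505405771691540268704290466399607430616553438220272241040669402974027285234564356163886718955674759930324615769064765579362413412766259042619360867426269685386567305766470130615474205767242876400856031039527931901080553177338155940532514227626689552606392520862658144579651692410696610039566029728584304238610749618821557130872131815653338448117925476769439298486033210681114658740336528904463429135065661319618331791341846216405092010105202884382955647592879640609833537449124931756849645305182406600834515117959068836428075516421347210800047671262513754711513311092535226827721839413683748919669844956501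
def phiC (i j k : Fin 7) : ℤ :=
  (((PHIN >>> (2 * (49 * i.val + 7 * j.val + k.val))) &&& 3 : ℕ) : ℤ) - 1
def psiC (i j k l : Fin 7) : ℤ :=
  (((PSIN >>> (2 * (343 * i.val + 49 * j.val + 7 * k.val + l.val))) &&& 3 : ℕ) : ℤ) - 1
def kdZ (i j : Fin 7) : ℤ := if i = j then 1 else 0
def E3Z (a b c i j k : Fin 7) : ℤ :=
  kdZ a i * kdZ b j * kdZ c k + kdZ a j * kdZ b k * kdZ c i + kdZ a k * kdZ b i * kdZ c j
    - kdZ a i * kdZ b k * kdZ c j - kdZ a j * kdZ b i * kdZ c k - kdZ a k * kdZ b j * kdZ c i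
def g2phiZ (i j k : Fin 7) : ℤ :=
  E3Z 0 1 2 i j k + E3Z 0 3 4 i j k + E3Z 0 5 6 i j k + E3Z 1 3 5 i j k
    - E3Z 1 4 6 i j k - E3Z 2 3 6 i j k - E3Z 2 4 5 i j k
def E4Z (a b c d i j k l : Fin 7) : ℤ :=
  kdZ a i * E3Z b c d j k l - kdZ a j * E3Z b c d i k l
    + kdZ a k * E3Z b c d i j l - kdZ a l * E3Z b c d i j k
def g2psiZ (i j k l : Fin 7) : ℤ :=
  E4Z 0 1 3 6 i j k l + E4Z 0 1 4 5 i j k l + E4Z 0 2 3 5 i j k l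
    - E4Z 0 2 4 6 i j k l - E4Z 1 2 3 4 i j k l - E4Z 1 2 5 6 i j k l - E4Z 3 4 5 6 i j k l

lemma kd_cast (i j : Fin 7) : kd i j = ((kdZ i j : ℤ) : ℝ) := by
  unfold kd kdZ; split <;> simp
lemma E3_cast (a b c i j k : Fin 7) : E3 a b c i j k = ((E3Z a b c i j k : ℤ) : ℝ) := by
  unfold E3 E3Z; simp only [kd_cast]; push_cast; ring
lemma g2phi_castZ (i j k : Fin 7) : g2phi i j k = ((g2phiZ i j k : ℤ) : ℝ) := by
  unfold g2phi g2phiZ; simp only [E3_cast]; push_cast; ring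
lemma E4_cast (a b c d i j k l : Fin 7) : E4 a b c d i j k l = ((E4Z a b c d i j k l : ℤ) : ℝ) := by
  unfold E4 E4Z; simp only [kd_cast, E3_cast]; push_cast; ring
lemma g2psi_castZ (i j k l : Fin 7) : g2psi i j k l = ((g2psiZ i j k l : ℤ) : ℝ) := by
  unfold g2psi g2psiZ; simp only [E4_cast]; push_cast; ring

set_option maxRecDepth 40000 in
lemma phiC_eq : ∀ i j k, g2phiZ i j k = phiC i j k := by decide
set_option maxRecDepth 40000 in
set_option maxHeartbeats 2000000 in
lemma psiC_eq : ∀ i j k l, g2psiZ i j k l = psiC i j k l := by decide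

lemma g2phi_cast (i j k : Fin 7) : g2phi i j k = ((phiC i j k : ℤ) : ℝ) := by
  rw [g2phi_castZ, phiC_eq]
lemma g2psi_cast (i j k l : Fin 7) : g2psi i j k l = ((psiC i j k l : ℤ) : ℝ) := by
  rw [g2psi_castZ, psiC_eq]

lemma phiC_swap12 : ∀ a b c, phiC b a c = - phiC a b c := by decide
lemma phiC_swap23 : ∀ a b c, phiC a c b = - phiC a b c := by decide

lemma g2phi_swap12 (a b c : Fin 7) : g2phi b a c = - g2phi a b c := by
  rw [g2phi_cast, g2phi_cast, phiC_swap12]; push_cast; ring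
lemma g2phi_swap23 (a b c : Fin 7) : g2phi a c b = - g2phi a b c := by
  rw [g2phi_cast, g2phi_cast, phiC_swap23]; push_cast; ring

/-! Permutation-sum machinery for `wedge22`. -/

noncomputable def WS (α β : Fin 7 → Fin 7 → ℝ) (v : Fin 4 → Fin 7) : ℝ :=
  ∑ σ : Equiv.Perm (Fin 4),
    ((Equiv.Perm.sign σ : ℤ) : ℝ) *
      (α (v (σ 0)) (v (σ 1)) * β (v (σ 2)) (v (σ 3)))

lemma wedge22_eq_WS (α β : Fin 7 → Fin 7 → ℝ) (i j k l : Fin 7) :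
    wedge22 α β i j k l = (1/4) * WS α β ![i, j, k, l] := by
  unfold wedge22 WS
  norm_num [Nat.factorial]

lemma WS_perm (α β : Fin 7 → Fin 7 → ℝ) (v w : Fin 4 → Fin 7) (τ : Equiv.Perm (Fin 4))
    (hτ : Equiv.Perm.sign τ = -1) (hv : ∀ x, w x = v (τ x)) :
    WS α β w = - WS α β v := by
  unfold WS
  have step : ∀ σ : Equiv.Perm (Fin 4),
      ((Equiv.Perm.sign σ : ℤ) : ℝ) * (α (w (σ 0)) (w (σ 1)) * β (w (σ 2)) (w (σ 3))) =
      -(((Equiv.Perm.sign (τ * σ) : ℤ) : ℝ) *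
        (α (v ((τ * σ) 0)) (v ((τ * σ) 1)) * β (v ((τ * σ) 2)) (v ((τ * σ) 3)))) := by
    intro σ
    simp only [hv, Equiv.Perm.mul_apply, Equiv.Perm.sign_mul, hτ]
    push_cast
    ring
  rw [Finset.sum_congr rfl (fun σ _ => step σ), ← Finset.sum_neg_distrib]
  have h2 := Equiv.sum_comp (Equiv.mulLeft τ)
    (fun σ => -(((Equiv.Perm.sign σ : ℤ) : ℝ) * (α (v (σ 0)) (v (σ 1)) * β (v (σ 2)) (v (σ 3)))))
  simp only [Equiv.coe_mulLeft] at h2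
  exact h2

lemma wedge22_swap01 (α β : Fin 7 → Fin 7 → ℝ) (i j k l : Fin 7) :
    wedge22 α β j i k l = - wedge22 α β i j k l := by
  rw [wedge22_eq_WS, wedge22_eq_WS,
    WS_perm α β ![i,j,k,l] ![j,i,k,l] (Equiv.swap 0 1)
      (Equiv.Perm.sign_swap (by decide)) (by intro x; fin_cases x <;> rfl)]
  ring

lemma wedge22_swap12 (α β : Fin 7 → Fin 7 → ℝ) (i j k l : Fin 7) :
    wedge22 α β i k j l = - wedge22 α β i j k l := by
  rw [wedge22_eq_WS, wedge22_eq_WS,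
    WS_perm α β ![i,j,k,l] ![i,k,j,l] (Equiv.swap 1 2)
      (Equiv.Perm.sign_swap (by decide)) (by intro x; fin_cases x <;> rfl)]
  ring

lemma wedge22_swap23 (α β : Fin 7 → Fin 7 → ℝ) (i j k l : Fin 7) :
    wedge22 α β i j l k = - wedge22 α β i j k l := by
  rw [wedge22_eq_WS, wedge22_eq_WS,
    WS_perm α β ![i,j,k,l] ![i,j,l,k] (Equiv.swap 2 3)
      (Equiv.Perm.sign_swap (by decide)) (by intro x; fin_cases x <;> rfl)]
  ring

theorem permsum {n : ℕ} (f : Equiv.Perm (Fin (n+1)) → ℝ) :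
    ∑ σ : Equiv.Perm (Fin (n+1)), f σ =
    ∑ x : Fin (n+1), ∑ e : Equiv.Perm (Fin n), f (Equiv.Perm.decomposeFin.symm (x, e)) := by
  rw [← Fintype.sum_equiv Equiv.Perm.decomposeFin.symm _ (fun σ => f σ) (fun _ => rfl)]
  rw [Fintype.sum_prod_type]

theorem permsum4 (f : Equiv.Perm (Fin 4) → ℝ) :
    ∑ σ : Equiv.Perm (Fin 4), f σ =
    ∑ x : Fin 4, ∑ e : Equiv.Perm (Fin 3), f (Equiv.Perm.decomposeFin.symm (x, e)) := permsum f
theorem permsum3 (f : Equiv.Perm (Fin 3) → ℝ) :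
    ∑ σ : Equiv.Perm (Fin 3), f σ =
    ∑ x : Fin 3, ∑ e : Equiv.Perm (Fin 2), f (Equiv.Perm.decomposeFin.symm (x, e)) := permsum f
theorem permsum2 (f : Equiv.Perm (Fin 2) → ℝ) :
    ∑ σ : Equiv.Perm (Fin 2), f σ =
    ∑ x : Fin 2, ∑ e : Equiv.Perm (Fin 1), f (Equiv.Perm.decomposeFin.symm (x, e)) := permsum f

theorem d4_1 (p : Fin 4) (e : Equiv.Perm (Fin 3)) :
    Equiv.Perm.decomposeFin.symm (p, e) 1 = Equiv.swap 0 p (e 0).succ :=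
  Equiv.Perm.decomposeFin_symm_apply_succ e p 0
theorem d4_2 (p : Fin 4) (e : Equiv.Perm (Fin 3)) :
    Equiv.Perm.decomposeFin.symm (p, e) 2 = Equiv.swap 0 p (e 1).succ :=
  Equiv.Perm.decomposeFin_symm_apply_succ e p 1
theorem d4_3 (p : Fin 4) (e : Equiv.Perm (Fin 3)) :
    Equiv.Perm.decomposeFin.symm (p, e) 3 = Equiv.swap 0 p (e 2).succ :=
  Equiv.Perm.decomposeFin_symm_apply_succ e p 2
theorem d3_1 (p : Fin 3) (e : Equiv.Perm (Fin 2)) :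
    Equiv.Perm.decomposeFin.symm (p, e) 1 = Equiv.swap 0 p (e 0).succ :=
  Equiv.Perm.decomposeFin_symm_apply_succ e p 0
theorem d3_2 (p : Fin 3) (e : Equiv.Perm (Fin 2)) :
    Equiv.Perm.decomposeFin.symm (p, e) 2 = Equiv.swap 0 p (e 1).succ :=
  Equiv.Perm.decomposeFin_symm_apply_succ e p 1
theorem d2_1 (p : Fin 2) (e : Equiv.Perm (Fin 1)) :
    Equiv.Perm.decomposeFin.symm (p, e) 1 = Equiv.swap 0 p (e 0).succ :=
  Equiv.Perm.decomposeFin_symm_apply_succ e p 0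

theorem wedge22_expand (α β : Fin 7 → Fin 7 → ℝ) (i j k l : Fin 7) :
    wedge22 α β i j k l = (1/4) * (α i j * β k l - α i j * β l k - α i k * β j l + α i k * β l j - α i l * β k j + α i l * β j k - α j i * β k l + α j i * β l k + α j k * β i l - α j k * β l i + α j l * β k i - α j l * β i k - α k j * β i l + α k j * β l i + α k i * β j l - α k i * β l j + α k l * β i j - α k l * β j i - α l j * β k i + α l j * β i k + α l k * β j i - α l k * β i j + α l i * β k j - α l i * β j k) := by
  unfold wedge22
  rw [show (1:Fin 4) = Fin.succ 0 from rfl, show (2:Fin 4) = Fin.succ 1 from rfl,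
      show (3:Fin 4) = Fin.succ 2 from rfl]
  simp only [permsum4, permsum3, permsum2, Equiv.Perm.decomposeFin.symm_sign,
    Equiv.Perm.decomposeFin_symm_apply_zero, d4_1, d4_2, d4_3, d3_1, d3_2, d2_1]
  simp only [Fin.sum_univ_four, Fin.sum_univ_three, Fin.sum_univ_two]
  try norm_num [Equiv.swap_apply_def, Fin.succ, Finset.univ_unique, Equiv.Perm.one_apply,
    Fin.ext_iff]
  try simp (config := { decide := true }) only [Fin.isValue]
  try simp only [if_true, if_false, show (⟨2, by omega⟩ : Fin 4) = 2 from rfl,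
    show (⟨3, by omega⟩ : Fin 4) = 3 from rfl]
  try simp only [show (1 : Fin 2 × Equiv.Perm (Fin 1)) = ((1 : Fin 2), (1 : Equiv.Perm (Fin 1))) from rfl]
  try simp only [d4_1, d4_2, d4_3, d3_1, d3_2, d2_1, Equiv.Perm.decomposeFin_symm_apply_zero,
    Equiv.Perm.decomposeFin.symm_sign]
  try norm_num [Equiv.swap_apply_def, Fin.succ, Finset.univ_unique, Equiv.Perm.one_apply,
    Fin.ext_iff]
  try simp (config := { decide := true }) only [Fin.isValue]
  try simp only [if_true, if_false, show (⟨2, by omega⟩ : Fin 4) = 2 from rfl,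
    show (⟨3, by omega⟩ : Fin 4) = 3 from rfl]
  try simp only [d4_1, d4_2, d4_3, d3_1, d3_2, d2_1, Equiv.Perm.decomposeFin_symm_apply_zero,
    Equiv.Perm.decomposeFin.symm_sign]
  try norm_num [Equiv.swap_apply_def, Fin.succ, Finset.univ_unique, Equiv.Perm.one_apply,
    Fin.ext_iff]
  try simp (config := { decide := true }) only [Fin.isValue]
  try simp only [if_true, if_false, show (⟨2, by omega⟩ : Fin 4) = 2 from rfl,
    show (⟨3, by omega⟩ : Fin 4) = 3 from rfl]
  simp only [Matrix.cons_val]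
  ring

/-! The key integer identity, for sorted indices, by `decide`. -/

set_option maxRecDepth 100000 in
set_option maxHeartbeats 16000000 in
lemma keyZ : ∀ m i j : Fin 7, i ≤ j → ∀ k : Fin 7, j ≤ k → ∀ l : Fin 7, k ≤ l →
    ((0 : ℤ) + phiC 0 i j * psiC m 0 k l - phiC 0 i j * psiC m 0 l k - phiC 0 i k * psiC m 0 j l + phiC 0 i k * psiC m 0 l j - phiC 0 i l * psiC m 0 k j + phiC 0 i l * psiC m 0 j k - phiC 0 j i * psiC m 0 k l + phiC 0 j i * psiC m 0 l k + phiC 0 j k * psiC m 0 i l - phiC 0 j k * psiC m 0 l i + phiC 0 j l * psiC m 0 k i - phiC 0 j l * psiC m 0 i k - phiC 0 k j * psiC m 0 i l + phiC 0 k j * psiC m 0 l i + phiC 0 k i * psiC m 0 j l - phiC 0 k i * psiC m 0 l j + phiC 0 k l * psiC m 0 i j - phiC 0 k l * psiC m 0 j i - phiC 0 l j * psiC m 0 k i + phiC 0 l j * psiC m 0 i k + phiC 0 l k * psiC m 0 j i - phiC 0 l k * psiC m 0 i j + phiC 0 l i * psiC m 0 k j - phiC 0 l i * psiC m 0 j k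 + phiC 1 i j * psiC m 1 k l - phiC 1 i j * psiC m 1 l k - phiC 1 i k * psiC m 1 j l + phiC 1 i k * psiC m 1 l j - phiC 1 i l * psiC m 1 k j + phiC 1 i l * psiC m 1 j k - phiC 1 j i * psiC m 1 k l + phiC 1 j i * psiC m 1 l k + phiC 1 j k * psiC m 1 i l - phiC 1 j k * psiC m 1 l i + phiC 1 j l * psiC m 1 k i - phiC 1 j l * psiC m 1 i k - phiC 1 k j * psiC m 1 i l + phiC 1 k j * psiC m 1 l i + phiC 1 k i * psiC m 1 j l - phiC 1 k i * psiC m 1 l j + phiC 1 k l * psiC m 1 i j - phiC 1 k l * psiC m 1 j i - phiC 1 l j * psiC m 1 k i + phiC 1 l j * psiC m 1 i k + phiC 1 l k * psiC m 1 j i - phiC 1 l k * psiC m 1 i j + phiC 1 l i * psiC m 1 k j - phiC 1 l i * psiC m 1 j k + phiC 2 i j * psiC m 2 k l - phiC 2 i j * psiC m 2 l k - phiC 2 i k * psiC m 2 j l + phiC 2 i k * psiC m 2 l j - phiC 2 i l * psiC m 2 k j + phiC 2 i l * psiC m 2 j k - phiC 2 j i * psiC m 2 k l + phiC 2 j i *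 psiC m 2 l k + phiC 2 j k * psiC m 2 i l - phiC 2 j k * psiC m 2 l i + phiC 2 j l * psiC m 2 k i - phiC 2 j l * psiC m 2 i k - phiC 2 k j * psiC m 2 i l + phiC 2 k j * psiC m 2 l i + phiC 2 k i * psiC m 2 j l - phiC 2 k i * psiC m 2 l j + phiC 2 k l * psiC m 2 i j - phiC 2 k l * psiC m 2 j i - phiC 2 l j * psiC m 2 k i + phiC 2 l j * psiC m 2 i k + phiC 2 l k * psiC m 2 j i - phiC 2 l k * psiC m 2 i j + phiC 2 l i * psiC m 2 k j - phiC 2 l i * psiC m 2 j k + phiC 3 i j * psiC m 3 k l - phiC 3 i j * psiC m 3 l k - phiC 3 i k * psiC m 3 j l + phiC 3 i k * psiC m 3 l j - phiC 3 i l * psiC m 3 k j + phiC 3 i l * psiC m 3 j k - phiC 3 j i * psiC m 3 k l + phiC 3 j i * psiC m 3 l k + phiC 3 j k * psiC m 3 i l - phiC 3 j k * psiC m 3 l i + phiC 3 j l * psiC m 3 k i - phiC 3 j l * psiC m 3 i k - phiC 3 k j * psiC m 3 i l + phiC 3 k j * psiC m 3 l i + phiC 3 k i * psiC m 3 j l -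 phiC 3 k i * psiC m 3 l j + phiC 3 k l * psiC m 3 i j - phiC 3 k l * psiC m 3 j i - phiC 3 l j * psiC m 3 k i + phiC 3 l j * psiC m 3 i k + phiC 3 l k * psiC m 3 j i - phiC 3 l k * psiC m 3 i j + phiC 3 l i * psiC m 3 k j - phiC 3 l i * psiC m 3 j k + phiC 4 i j * psiC m 4 k l - phiC 4 i j * psiC m 4 l k - phiC 4 i k * psiC m 4 j l + phiC 4 i k * psiC m 4 l j - phiC 4 i l * psiC m 4 k j + phiC 4 i l * psiC m 4 j k - phiC 4 j i * psiC m 4 k l + phiC 4 j i * psiC m 4 l k + phiC 4 j k * psiC m 4 i l - phiC 4 j k * psiC m 4 l i + phiC 4 j l * psiC m 4 k i - phiC 4 j l * psiC m 4 i k - phiC 4 k j * psiC m 4 i l + phiC 4 k j * psiC m 4 l i + phiC 4 k i * psiC m 4 j l - phiC 4 k i * psiC m 4 l j + phiC 4 k l * psiC m 4 i j - phiC 4 k l * psiC m 4 j i - phiC 4 l j * psiC m 4 k i + phiC 4 l j * psiC m 4 i k + phiC 4 l k * psiC m 4 j i - phiC 4 l k * psiC m 4 i j + phiC 4 l i * psiC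 m 4 k j - phiC 4 l i * psiC m 4 j k + phiC 5 i j * psiC m 5 k l - phiC 5 i j * psiC m 5 l k - phiC 5 i k * psiC m 5 j l + phiC 5 i k * psiC m 5 l j - phiC 5 i l * psiC m 5 k j + phiC 5 i l * psiC m 5 j k - phiC 5 j i * psiC m 5 k l + phiC 5 j i * psiC m 5 l k + phiC 5 j k * psiC m 5 i l - phiC 5 j k * psiC m 5 l i + phiC 5 j l * psiC m 5 k i - phiC 5 j l * psiC m 5 i k - phiC 5 k j * psiC m 5 i l + phiC 5 k j * psiC m 5 l i + phiC 5 k i * psiC m 5 j l - phiC 5 k i * psiC m 5 l j + phiC 5 k l * psiC m 5 i j - phiC 5 k l * psiC m 5 j i - phiC 5 l j * psiC m 5 k i + phiC 5 l j * psiC m 5 i k + phiC 5 l k * psiC m 5 j i - phiC 5 l k * psiC m 5 i j + phiC 5 l i * psiC m 5 k j - phiC 5 l i * psiC m 5 j k + phiC 6 i j * psiC m 6 k l - phiC 6 i j * psiC m 6 l k - phiC 6 i k * psiC m 6 j l + phiC 6 i k * psiC m 6 l j - phiC 6 i l * psiC m 6 k j + phiC 6 i l * psiC m 6 j k - phiC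 6 j i * psiC m 6 k l + phiC 6 j i * psiC m 6 l k + phiC 6 j k * psiC m 6 i l - phiC 6 j k * psiC m 6 l i + phiC 6 j l * psiC m 6 k i - phiC 6 j l * psiC m 6 i k - phiC 6 k j * psiC m 6 i l + phiC 6 k j * psiC m 6 l i + phiC 6 k i * psiC m 6 j l - phiC 6 k i * psiC m 6 l j + phiC 6 k l * psiC m 6 i j - phiC 6 k l * psiC m 6 j i - phiC 6 l j * psiC m 6 k i + phiC 6 l j * psiC m 6 i k + phiC 6 l k * psiC m 6 j i - phiC 6 l k * psiC m 6 i j + phiC 6 l i * psiC m 6 k j - phiC 6 l i * psiC m 6 j k) =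
    12 * (kdZ m i * phiC j k l - kdZ m j * phiC i k l + kdZ m k * phiC i j l
      - kdZ m l * phiC i j k) := by decide

/-! The two sides, and swap lemmas. -/

noncomputable def Lw (m i j k l : Fin 7) : ℝ :=
  ∑ p : Fin 7, wedge22 (fun a b => g2phi p a b) (fun a b => g2psi m p a b) i j k l
noncomputable def Rw (m i j k l : Fin 7) : ℝ :=
  3 * (kd m i * g2phi j k l - kd m j * g2phi i k l + kd m k * g2phi i j l
    - kd m l * g2phi i j k)

lemma Lw_swap01 (m i j k l : Fin 7) : Lw m j i k l = - Lw m i j k l := by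
  unfold Lw; rw [← Finset.sum_neg_distrib]
  exact Finset.sum_congr rfl fun p _ => wedge22_swap01 _ _ i j k l
lemma Lw_swap12 (m i j k l : Fin 7) : Lw m i k j l = - Lw m i j k l := by
  unfold Lw; rw [← Finset.sum_neg_distrib]
  exact Finset.sum_congr rfl fun p _ => wedge22_swap12 _ _ i j k l
lemma Lw_swap23 (m i j k l : Fin 7) : Lw m i j l k = - Lw m i j k l := by
  unfold Lw; rw [← Finset.sum_neg_distrib]
  exact Finset.sum_congr rfl fun p _ => wedge22_swap23 _ _ i j k l

lemma Rw_swap01 (m i j k l : Fin 7) : Rw m j i k l = - Rw m i j k l := by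
  unfold Rw
  rw [show g2phi j i l = - g2phi i j l from g2phi_swap12 i j l,
      show g2phi j i k = - g2phi i j k from g2phi_swap12 i j k]
  ring
lemma Rw_swap12 (m i j k l : Fin 7) : Rw m i k j l = - Rw m i j k l := by
  unfold Rw
  rw [show g2phi k j l = - g2phi j k l from g2phi_swap12 j k l,
      show g2phi i k j = - g2phi i j k from g2phi_swap23 i j k]
  ring
lemma Rw_swap23 (m i j k l : Fin 7) : Rw m i j l k = - Rw m i j k l := by
  unfold Rw
  rw [show g2phi j l k = - g2phi j k l from g2phi_swap23 j k l,
      show g2phi i l k = - g2phi i k l from g2phi_swap23 i k l]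
  ring

lemma swA (m i j k l : Fin 7) (h : Lw m i j k l = Rw m i j k l) :
    Lw m j i k l = Rw m j i k l := by rw [Lw_swap01, Rw_swap01, h]
lemma swB (m i j k l : Fin 7) (h : Lw m i j k l = Rw m i j k l) :
    Lw m i k j l = Rw m i k j l := by rw [Lw_swap12, Rw_swap12, h]
lemma swC (m i j k l : Fin 7) (h : Lw m i j k l = Rw m i j k l) :
    Lw m i j l k = Rw m i j l k := by rw [Lw_swap23, Rw_swap23, h]

set_option maxRecDepth 100000 in
set_option maxHeartbeats 4000000 in
lemma K4 (m i j k l : Fin 7) (h1 : i ≤ j) (h2 : j ≤ k) (h3 : k ≤ l) :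
    Lw m i j k l = Rw m i j k l := by
  have key := keyZ m i j h1 k h2 l h3
  have keyR : ((0 : ℝ) + ((phiC 0 i j : ℤ) : ℝ) * ((psiC m 0 k l : ℤ) : ℝ) - ((phiC 0 i j : ℤ) : ℝ) * ((psiC m 0 l k : ℤ) : ℝ) - ((phiC 0 i k : ℤ) : ℝ) * ((psiC m 0 j l : ℤ) : ℝ) + ((phiC 0 i k : ℤ) : ℝ) * ((psiC m 0 l j : ℤ) : ℝ) - ((phiC 0 i l : ℤ) : ℝ) * ((psiC m 0 k j : ℤ) : ℝ) + ((phiC 0 i l : ℤ) : ℝ) * ((psiC m 0 j k : ℤ) : ℝ) - ((phiC 0 j i : ℤ) : ℝ) * ((psiC m 0 k l : ℤ) : ℝ) + ((phiC 0 j i : ℤ) : ℝ) * ((psiC m 0 l k : ℤ) : ℝ) + ((phiC 0 j k : ℤ) : ℝ) * ((psiC m 0 i l : ℤ) : ℝ) - ((phiC 0 j k : ℤ) : ℝ) * ((psiC m 0 l i : ℤ) : ℝ) + ((phiC 0 j l : ℤ) : ℝ) * ((psiC m 0 k i : ℤ) : ℝ) - ((phiC 0 j l : ℤ) : ℝ)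 * ((psiC m 0 i k : ℤ) : ℝ) - ((phiC 0 k j : ℤ) : ℝ) * ((psiC m 0 i l : ℤ) : ℝ) + ((phiC 0 k j : ℤ) : ℝ) * ((psiC m 0 l i : ℤ) : ℝ) + ((phiC 0 k i : ℤ) : ℝ) * ((psiC m 0 j l : ℤ) : ℝ) - ((phiC 0 k i : ℤ) : ℝ) * ((psiC m 0 l j : ℤ) : ℝ) + ((phiC 0 k l : ℤ) : ℝ) * ((psiC m 0 i j : ℤ) : ℝ) - ((phiC 0 k l : ℤ) : ℝ) * ((psiC m 0 j i : ℤ) : ℝ) - ((phiC 0 l j : ℤ) : ℝ) * ((psiC m 0 k i : ℤ) : ℝ) + ((phiC 0 l j : ℤ) : ℝ) * ((psiC m 0 i k : ℤ) : ℝ) + ((phiC 0 l k : ℤ) : ℝ) * ((psiC m 0 j i : ℤ) : ℝ) - ((phiC 0 l k : ℤ) : ℝ) * ((psiC m 0 i j : ℤ) : ℝ) + ((phiC 0 l i : ℤ) : ℝ) * ((psiC m 0 k j : ℤ) : ℝ) - ((phiC 0 l i : ℤ) : ℝ) * ((psiC m 0 j k : ℤ) : ℝ) + ((phiC 1 i j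 : ℤ) : ℝ) * ((psiC m 1 k l : ℤ) : ℝ) - ((phiC 1 i j : ℤ) : ℝ) * ((psiC m 1 l k : ℤ) : ℝ) - ((phiC 1 i k : ℤ) : ℝ) * ((psiC m 1 j l : ℤ) : ℝ) + ((phiC 1 i k : ℤ) : ℝ) * ((psiC m 1 l j : ℤ) : ℝ) - ((phiC 1 i l : ℤ) : ℝ) * ((psiC m 1 k j : ℤ) : ℝ) + ((phiC 1 i l : ℤ) : ℝ) * ((psiC m 1 j k : ℤ) : ℝ) - ((phiC 1 j i : ℤ) : ℝ) * ((psiC m 1 k l : ℤ) : ℝ) + ((phiC 1 j i : ℤ) : ℝ) * ((psiC m 1 l k : ℤ) : ℝ) + ((phiC 1 j k : ℤ) : ℝ) * ((psiC m 1 i l : ℤ) : ℝ) - ((phiC 1 j k : ℤ) : ℝ) * ((psiC m 1 l i : ℤ) : ℝ) + ((phiC 1 j l : ℤ) : ℝ) * ((psiC m 1 k i : ℤ) : ℝ) - ((phiC 1 j l : ℤ) : ℝ) * ((psiC m 1 i k : ℤ) : ℝ) - ((phiC 1 k j : ℤ) : ℝ) * ((psiC m 1 i l : ℤ) : ℝ)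 + ((phiC 1 k j : ℤ) : ℝ) * ((psiC m 1 l i : ℤ) : ℝ) + ((phiC 1 k i : ℤ) : ℝ) * ((psiC m 1 j l : ℤ) : ℝ) - ((phiC 1 k i : ℤ) : ℝ) * ((psiC m 1 l j : ℤ) : ℝ) + ((phiC 1 k l : ℤ) : ℝ) * ((psiC m 1 i j : ℤ) : ℝ) - ((phiC 1 k l : ℤ) : ℝ) * ((psiC m 1 j i : ℤ) : ℝ) - ((phiC 1 l j : ℤ) : ℝ) * ((psiC m 1 k i : ℤ) : ℝ) + ((phiC 1 l j : ℤ) : ℝ) * ((psiC m 1 i k : ℤ) : ℝ) + ((phiC 1 l k : ℤ) : ℝ) * ((psiC m 1 j i : ℤ) : ℝ) - ((phiC 1 l k : ℤ) : ℝ) * ((psiC m 1 i j : ℤ) : ℝ) + ((phiC 1 l i : ℤ) : ℝ) * ((psiC m 1 k j : ℤ) : ℝ) - ((phiC 1 l i : ℤ) : ℝ) * ((psiC m 1 j k : ℤ) : ℝ) + ((phiC 2 i j : ℤ) : ℝ) * ((psiC m 2 k l : ℤ) : ℝ) - ((phiC 2 i j : ℤ) : ℝ) * ((psiC m 2 l k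 : ℤ) : ℝ) - ((phiC 2 i k : ℤ) : ℝ) * ((psiC m 2 j l : ℤ) : ℝ) + ((phiC 2 i k : ℤ) : ℝ) * ((psiC m 2 l j : ℤ) : ℝ) - ((phiC 2 i l : ℤ) : ℝ) * ((psiC m 2 k j : ℤ) : ℝ) + ((phiC 2 i l : ℤ) : ℝ) * ((psiC m 2 j k : ℤ) : ℝ) - ((phiC 2 j i : ℤ) : ℝ) * ((psiC m 2 k l : ℤ) : ℝ) + ((phiC 2 j i : ℤ) : ℝ) * ((psiC m 2 l k : ℤ) : ℝ) + ((phiC 2 j k : ℤ) : ℝ) * ((psiC m 2 i l : ℤ) : ℝ) - ((phiC 2 j k : ℤ) : ℝ) * ((psiC m 2 l i : ℤ) : ℝ) + ((phiC 2 j l : ℤ) : ℝ) * ((psiC m 2 k i : ℤ) : ℝ) - ((phiC 2 j l : ℤ) : ℝ) * ((psiC m 2 i k : ℤ) : ℝ) - ((phiC 2 k j : ℤ) : ℝ) * ((psiC m 2 i l : ℤ) : ℝ) + ((phiC 2 k j : ℤ) : ℝ) * ((psiC m 2 l i : ℤ) : ℝ) + ((phiC 2 k i : ℤ) : ℝ)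 * ((psiC m 2 j l : ℤ) : ℝ) - ((phiC 2 k i : ℤ) : ℝ) * ((psiC m 2 l j : ℤ) : ℝ) + ((phiC 2 k l : ℤ) : ℝ) * ((psiC m 2 i j : ℤ) : ℝ) - ((phiC 2 k l : ℤ) : ℝ) * ((psiC m 2 j i : ℤ) : ℝ) - ((phiC 2 l j : ℤ) : ℝ) * ((psiC m 2 k i : ℤ) : ℝ) + ((phiC 2 l j : ℤ) : ℝ) * ((psiC m 2 i k : ℤ) : ℝ) + ((phiC 2 l k : ℤ) : ℝ) * ((psiC m 2 j i : ℤ) : ℝ) - ((phiC 2 l k : ℤ) : ℝ) * ((psiC m 2 i j : ℤ) : ℝ) + ((phiC 2 l i : ℤ) : ℝ) * ((psiC m 2 k j : ℤ) : ℝ) - ((phiC 2 l i : ℤ) : ℝ) * ((psiC m 2 j k : ℤ) : ℝ) + ((phiC 3 i j : ℤ) : ℝ) * ((psiC m 3 k l : ℤ) : ℝ) - ((phiC 3 i j : ℤ) : ℝ) * ((psiC m 3 l k : ℤ) : ℝ) - ((phiC 3 i k : ℤ) : ℝ) * ((psiC m 3 j l : ℤ) : ℝ) + ((phiC 3 i k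 : ℤ) : ℝ) * ((psiC m 3 l j : ℤ) : ℝ) - ((phiC 3 i l : ℤ) : ℝ) * ((psiC m 3 k j : ℤ) : ℝ) + ((phiC 3 i l : ℤ) : ℝ) * ((psiC m 3 j k : ℤ) : ℝ) - ((phiC 3 j i : ℤ) : ℝ) * ((psiC m 3 k l : ℤ) : ℝ) + ((phiC 3 j i : ℤ) : ℝ) * ((psiC m 3 l k : ℤ) : ℝ) + ((phiC 3 j k : ℤ) : ℝ) * ((psiC m 3 i l : ℤ) : ℝ) - ((phiC 3 j k : ℤ) : ℝ) * ((psiC m 3 l i : ℤ) : ℝ) + ((phiC 3 j l : ℤ) : ℝ) * ((psiC m 3 k i : ℤ) : ℝ) - ((phiC 3 j l : ℤ) : ℝ) * ((psiC m 3 i k : ℤ) : ℝ) - ((phiC 3 k j : ℤ) : ℝ) * ((psiC m 3 i l : ℤ) : ℝ) + ((phiC 3 k j : ℤ) : ℝ) * ((psiC m 3 l i : ℤ) : ℝ) + ((phiC 3 k i : ℤ) : ℝ) * ((psiC m 3 j l : ℤ) : ℝ) - ((phiC 3 k i : ℤ) : ℝ) * ((psiC m 3 l j : ℤ) : ℝ)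 + ((phiC 3 k l : ℤ) : ℝ) * ((psiC m 3 i j : ℤ) : ℝ) - ((phiC 3 k l : ℤ) : ℝ) * ((psiC m 3 j i : ℤ) : ℝ) - ((phiC 3 l j : ℤ) : ℝ) * ((psiC m 3 k i : ℤ) : ℝ) + ((phiC 3 l j : ℤ) : ℝ) * ((psiC m 3 i k : ℤ) : ℝ) + ((phiC 3 l k : ℤ) : ℝ) * ((psiC m 3 j i : ℤ) : ℝ) - ((phiC 3 l k : ℤ) : ℝ) * ((psiC m 3 i j : ℤ) : ℝ) + ((phiC 3 l i : ℤ) : ℝ) * ((psiC m 3 k j : ℤ) : ℝ) - ((phiC 3 l i : ℤ) : ℝ) * ((psiC m 3 j k : ℤ) : ℝ) + ((phiC 4 i j : ℤ) : ℝ) * ((psiC m 4 k l : ℤ) : ℝ) - ((phiC 4 i j : ℤ) : ℝ) * ((psiC m 4 l k : ℤ) : ℝ) - ((phiC 4 i k : ℤ) : ℝ) * ((psiC m 4 j l : ℤ) : ℝ) + ((phiC 4 i k : ℤ) : ℝ) * ((psiC m 4 l j : ℤ) : ℝ) - ((phiC 4 i l : ℤ) : ℝ) * ((psiC m 4 k j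 : ℤ) : ℝ) + ((phiC 4 i l : ℤ) : ℝ) * ((psiC m 4 j k : ℤ) : ℝ) - ((phiC 4 j i : ℤ) : ℝ) * ((psiC m 4 k l : ℤ) : ℝ) + ((phiC 4 j i : ℤ) : ℝ) * ((psiC m 4 l k : ℤ) : ℝ) + ((phiC 4 j k : ℤ) : ℝ) * ((psiC m 4 i l : ℤ) : ℝ) - ((phiC 4 j k : ℤ) : ℝ) * ((psiC m 4 l i : ℤ) : ℝ) + ((phiC 4 j l : ℤ) : ℝ) * ((psiC m 4 k i : ℤ) : ℝ) - ((phiC 4 j l : ℤ) : ℝ) * ((psiC m 4 i k : ℤ) : ℝ) - ((phiC 4 k j : ℤ) : ℝ) * ((psiC m 4 i l : ℤ) : ℝ) + ((phiC 4 k j : ℤ) : ℝ) * ((psiC m 4 l i : ℤ) : ℝ) + ((phiC 4 k i : ℤ) : ℝ) * ((psiC m 4 j l : ℤ) : ℝ) - ((phiC 4 k i : ℤ) : ℝ) * ((psiC m 4 l j : ℤ) : ℝ) + ((phiC 4 k l : ℤ) : ℝ) * ((psiC m 4 i j : ℤ) : ℝ) - ((phiC 4 k l : ℤ) : ℝ)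 * ((psiC m 4 j i : ℤ) : ℝ) - ((phiC 4 l j : ℤ) : ℝ) * ((psiC m 4 k i : ℤ) : ℝ) + ((phiC 4 l j : ℤ) : ℝ) * ((psiC m 4 i k : ℤ) : ℝ) + ((phiC 4 l k : ℤ) : ℝ) * ((psiC m 4 j i : ℤ) : ℝ) - ((phiC 4 l k : ℤ) : ℝ) * ((psiC m 4 i j : ℤ) : ℝ) + ((phiC 4 l i : ℤ) : ℝ) * ((psiC m 4 k j : ℤ) : ℝ) - ((phiC 4 l i : ℤ) : ℝ) * ((psiC m 4 j k : ℤ) : ℝ) + ((phiC 5 i j : ℤ) : ℝ) * ((psiC m 5 k l : ℤ) : ℝ) - ((phiC 5 i j : ℤ) : ℝ) * ((psiC m 5 l k : ℤ) : ℝ) - ((phiC 5 i k : ℤ) : ℝ) * ((psiC m 5 j l : ℤ) : ℝ) + ((phiC 5 i k : ℤ) : ℝ) * ((psiC m 5 l j : ℤ) : ℝ) - ((phiC 5 i l : ℤ) : ℝ) * ((psiC m 5 k j : ℤ) : ℝ) + ((phiC 5 i l : ℤ) : ℝ) * ((psiC m 5 j k : ℤ) : ℝ) - ((phiC 5 j i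 : ℤ) : ℝ) * ((psiC m 5 k l : ℤ) : ℝ) + ((phiC 5 j i : ℤ) : ℝ) * ((psiC m 5 l k : ℤ) : ℝ) + ((phiC 5 j k : ℤ) : ℝ) * ((psiC m 5 i l : ℤ) : ℝ) - ((phiC 5 j k : ℤ) : ℝ) * ((psiC m 5 l i : ℤ) : ℝ) + ((phiC 5 j l : ℤ) : ℝ) * ((psiC m 5 k i : ℤ) : ℝ) - ((phiC 5 j l : ℤ) : ℝ) * ((psiC m 5 i k : ℤ) : ℝ) - ((phiC 5 k j : ℤ) : ℝ) * ((psiC m 5 i l : ℤ) : ℝ) + ((phiC 5 k j : ℤ) : ℝ) * ((psiC m 5 l i : ℤ) : ℝ) + ((phiC 5 k i : ℤ) : ℝ) * ((psiC m 5 j l : ℤ) : ℝ) - ((phiC 5 k i : ℤ) : ℝ) * ((psiC m 5 l j : ℤ) : ℝ) + ((phiC 5 k l : ℤ) : ℝ) * ((psiC m 5 i j : ℤ) : ℝ) - ((phiC 5 k l : ℤ) : ℝ) * ((psiC m 5 j i : ℤ) : ℝ) - ((phiC 5 l j : ℤ) : ℝ) * ((psiC m 5 k i : ℤ) : ℝ)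 + ((phiC 5 l j : ℤ) : ℝ) * ((psiC m 5 i k : ℤ) : ℝ) + ((phiC 5 l k : ℤ) : ℝ) * ((psiC m 5 j i : ℤ) : ℝ) - ((phiC 5 l k : ℤ) : ℝ) * ((psiC m 5 i j : ℤ) : ℝ) + ((phiC 5 l i : ℤ) : ℝ) * ((psiC m 5 k j : ℤ) : ℝ) - ((phiC 5 l i : ℤ) : ℝ) * ((psiC m 5 j k : ℤ) : ℝ) + ((phiC 6 i j : ℤ) : ℝ) * ((psiC m 6 k l : ℤ) : ℝ) - ((phiC 6 i j : ℤ) : ℝ) * ((psiC m 6 l k : ℤ) : ℝ) - ((phiC 6 i k : ℤ) : ℝ) * ((psiC m 6 j l : ℤ) : ℝ) + ((phiC 6 i k : ℤ) : ℝ) * ((psiC m 6 l j : ℤ) : ℝ) - ((phiC 6 i l : ℤ) : ℝ) * ((psiC m 6 k j : ℤ) : ℝ) + ((phiC 6 i l : ℤ) : ℝ) * ((psiC m 6 j k : ℤ) : ℝ) - ((phiC 6 j i : ℤ) : ℝ) * ((psiC m 6 k l : ℤ) : ℝ) + ((phiC 6 j i : ℤ) : ℝ) * ((psiC m 6 l k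 : ℤ) : ℝ) + ((phiC 6 j k : ℤ) : ℝ) * ((psiC m 6 i l : ℤ) : ℝ) - ((phiC 6 j k : ℤ) : ℝ) * ((psiC m 6 l i : ℤ) : ℝ) + ((phiC 6 j l : ℤ) : ℝ) * ((psiC m 6 k i : ℤ) : ℝ) - ((phiC 6 j l : ℤ) : ℝ) * ((psiC m 6 i k : ℤ) : ℝ) - ((phiC 6 k j : ℤ) : ℝ) * ((psiC m 6 i l : ℤ) : ℝ) + ((phiC 6 k j : ℤ) : ℝ) * ((psiC m 6 l i : ℤ) : ℝ) + ((phiC 6 k i : ℤ) : ℝ) * ((psiC m 6 j l : ℤ) : ℝ) - ((phiC 6 k i : ℤ) : ℝ) * ((psiC m 6 l j : ℤ) : ℝ) + ((phiC 6 k l : ℤ) : ℝ) * ((psiC m 6 i j : ℤ) : ℝ) - ((phiC 6 k l : ℤ) : ℝ) * ((psiC m 6 j i : ℤ) : ℝ) - ((phiC 6 l j : ℤ) : ℝ) * ((psiC m 6 k i : ℤ) : ℝ) + ((phiC 6 l j : ℤ) : ℝ) * ((psiC m 6 i k : ℤ) : ℝ) + ((phiC 6 l k : ℤ) : ℝ)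 * ((psiC m 6 j i : ℤ) : ℝ) - ((phiC 6 l k : ℤ) : ℝ) * ((psiC m 6 i j : ℤ) : ℝ) + ((phiC 6 l i : ℤ) : ℝ) * ((psiC m 6 k j : ℤ) : ℝ) - ((phiC 6 l i : ℤ) : ℝ) * ((psiC m 6 j k : ℤ) : ℝ)) =
      12 * (((kdZ m i : ℤ) : ℝ) * ((phiC j k l : ℤ) : ℝ)
        - ((kdZ m j : ℤ) : ℝ) * ((phiC i k l : ℤ) : ℝ)
        + ((kdZ m k : ℤ) : ℝ) * ((phiC i j l : ℤ) : ℝ)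
        - ((kdZ m l : ℤ) : ℝ) * ((phiC i j k : ℤ) : ℝ)) := by exact_mod_cast key
  unfold Lw Rw
  rw [Fin.sum_univ_seven]
  simp only [wedge22_expand, g2phi_cast, g2psi_cast, kd_cast]
  linear_combination keyR / 4

lemma K3 (m i j k : Fin 7) (h1 : i ≤ j) (h2 : j ≤ k) :
    ∀ l, Lw m i j k l = Rw m i j k l := by
  intro l
  rcases le_total k l with h | h
  · exact K4 m i j k l h1 h2 h
  rcases le_total j l with h' | h'
  · exact swC m i j l k (K4 m i j l k h1 h' h)
  rcases le_total i l with h'' | h''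
  · exact swC m i j l k (swB m i l j k (K4 m i l j k h'' h' h2))
  · exact swC m i j l k (swB m i l j k (swA m l i j k (K4 m l i j k h'' h1 h2)))

lemma K2 (m i j : Fin 7) (h1 : i ≤ j) : ∀ k l, Lw m i j k l = Rw m i j k l := by
  intro k l
  rcases le_total j k with h | h
  · exact K3 m i j k h1 h l
  rcases le_total i k with h' | h'
  · exact swB m i k j l (K3 m i k j h' h l)
  · exact swB m i k j l (swA m k i j l (K3 m k i j h' h1 l))

lemma K1 (m : Fin 7) : ∀ i j k l, Lw m i j k l = Rw m i j k l := by
  intro i j k l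
  rcases le_total i j with h | h
  · exact K2 m i j h k l
  · exact swA m j i k l (K2 m j i h k l)

end Aux

/-- Proposition 2.6, second identity:
`Σ_p (e_p ⌟ φ) ∧ (e_p ⌟ e_m ⌟ ψ) = 3 e_m♭ ∧ φ  (= −3 ⋆(e_m ⌟ ψ))`, in components. -/
theorem stmt_14 (m i j k l : Fin 7) :
    ∑ p : Fin 7, wedge22 (fun a b => g2phi p a b) (fun a b => g2psi m p a b) i j k l =
      3 * (kd m i * g2phi j k l - kd m j * g2phi i k l + kd m k * g2phi i j l
        - kd m l * g2phi i j k) := by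
  exact K1 m i j k l
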